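/- arXiv:2101.05009 — 2 statements merged into one kernel-verified Lean document; each statement's English description precedes it below -/
import Mathlib

section
/- Let (X_d, Y_d, Z_d) be a random vector taking values in a countable set, with finite joint entropy. Let Ĥ_n denote the plug-in empirical entropy computed from n i.i.d. samples. Then Ĥ_n(X_d,Y_d,Z_d) → H(X_d,Y_d,Z_d) almost surely as n → ∞. -/
/-! By the strong law of large numbers every empirical frequency converges almost surely to
`p s`. As the terms `-q log q` are nonnegative, `Ĥ_n` dominates each finite partial sum, whose
limit is the corresponding partial sum of `H`; hence `liminf Ĥ_n ≥ H`. Conversely, Gibbs'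
inequality bounds `Ĥ_n` by the empirical cross-entropy `(1/n) ∑_{i<n} -log p(X_i)`, which
converges almost surely to `H` by the strong law applied to `-log p(X_0)`, an integrable
variable of mean `H`. -/

open MeasureTheory ProbabilityTheory Filter

open Finset Real Topology

lemma negMulLog_le_mul_neg_log_add_sub {p q : ℝ} (hp : 0 < p) (hq : 0 ≤ q) :
    negMulLog q ≤ q * -log p + (p - q) := by
  have hqp : 0 ≤ q / p := div_nonneg hq hp.le
  calc negMulLog q = negMulLog (p * (q / p)) := by rw [mul_div_cancel₀ q hp.ne']
    _ = q / p * negMulLog p + p * negMulLog (q / p) := negMulLog_mul p (q / p)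
    _ ≤ q / p * negMulLog p + p * (1 - q / p) := by
      gcongr; exact negMulLog_le_one_sub_self hqp
    _ = q * -log p + (p - q) := by
      rw [negMulLog]; field_simp

theorem Finset.sum_negMulLog_le_sum_mul_neg_log {ι : Type*} {F : Finset ι} {p q : ι → ℝ}
    (hp : ∀ i ∈ F, 0 < p i) (hq : ∀ i ∈ F, 0 ≤ q i)
    (hp1 : ∑ i ∈ F, p i ≤ 1) (hq1 : ∑ i ∈ F, q i = 1) :
    ∑ i ∈ F, negMulLog (q i) ≤ ∑ i ∈ F, q i * -log (p i) :=
  calc ∑ i ∈ F, negMulLog (q i) ≤ ∑ i ∈ F, (q i * -log (p i) + (p i - q i)) :=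
        sum_le_sum fun i hi => negMulLog_le_mul_neg_log_add_sub (hp i hi) (hq i hi)
    _ = ∑ i ∈ F, q i * -log (p i) + (∑ i ∈ F, p i - ∑ i ∈ F, q i) := by
        rw [sum_add_distrib, sum_sub_distrib]
    _ ≤ ∑ i ∈ F, q i * -log (p i) := by linarith

theorem tendsto_tsum_of_tendsto_of_eventually_le {S : Type*} {f : ℕ → S → ℝ} {g : S → ℝ}
    {u : ℕ → ℝ} {a : ℝ} (hf₀ : ∀ n s, 0 ≤ f n s) (hf : ∀ n, Summable (f n)) (hg : HasSum g a)
    (hlim : ∀ s, Tendsto (fun n => f n s) atTop (𝓝 (g s)))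
    (hle : ∀ᶠ n in atTop, ∑' s, f n s ≤ u n) (hu : Tendsto u atTop (𝓝 a)) :
    Tendsto (fun n => ∑' s, f n s) atTop (𝓝 a) := by
  refine tendsto_order.2 ⟨fun b hb => ?_, fun b hb => ?_⟩
  · obtain ⟨A, hA⟩ := (hg.eventually (Ioi_mem_nhds hb)).exists
    filter_upwards [(tendsto_finsetSum A fun s _ => hlim s).eventually (Ioi_mem_nhds hA)]
      with n hn
    exact hn.trans_le ((hf n).sum_le_tsum A fun s _ => hf₀ n s)
  · filter_upwards [hle, hu.eventually (Iio_mem_nhds hb)] with n h₁ h₂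
    exact h₁.trans_lt h₂

section Empirical

variable {S : Type*} [DecidableEq S]

noncomputable def empiricalFreq (x : ℕ → S) (n : ℕ) (s : S) : ℝ :=
  (((range n).filter (fun i => x i = s)).card : ℝ) / n

noncomputable def empiricalEntropy (x : ℕ → S) (n : ℕ) : ℝ :=
  ∑' s, negMulLog (empiricalFreq x n s)

variable (x : ℕ → S) (n : ℕ)

lemma empiricalFreq_nonneg (s : S) : 0 ≤ empiricalFreq x n s := by
  unfold empiricalFreq; positivity

lemma empiricalFreq_le_one (s : S) : empiricalFreq x n s ≤ 1 := by
  refine div_le_one_of_le₀ ?_ n.cast_nonneg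
  exact_mod_cast (card_filter_le _ _).trans_eq (card_range n)

lemma empiricalFreq_eq_zero_of_notMem {s : S} (hs : s ∉ (range n).image x) :
    empiricalFreq x n s = 0 := by
  have : (range n).filter (fun i => x i = s) = ∅ :=
    filter_eq_empty_iff.2 fun i hi hxi => hs (hxi ▸ mem_image_of_mem x hi)
  simp [empiricalFreq, this]

lemma sum_empiricalFreq_mul (g : S → ℝ) :
    ∑ s ∈ (range n).image x, empiricalFreq x n s * g s = (∑ i ∈ range n, g (x i)) / n := by
  rw [← sum_fiberwise_of_maps_to (fun i hi => mem_image_of_mem x hi), sum_div]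
  refine sum_congr rfl fun s _ => ?_
  rw [sum_congr rfl fun i hi => congrArg g (mem_filter.1 hi).2, sum_const, nsmul_eq_mul,
    empiricalFreq, div_mul_eq_mul_div]

lemma sum_empiricalFreq (hn : n ≠ 0) : ∑ s ∈ (range n).image x, empiricalFreq x n s = 1 := by
  simpa [hn] using sum_empiricalFreq_mul x n 1

lemma empiricalEntropy_eq_sum :
    empiricalEntropy x n = ∑ s ∈ (range n).image x, negMulLog (empiricalFreq x n s) :=
  tsum_eq_sum fun s hs => by rw [empiricalFreq_eq_zero_of_notMem x n hs, negMulLog_zero]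

lemma empiricalEntropy_le {p : S → ℝ} (hp : ∀ i, 0 < p (x i))
    (hp1 : ∀ F : Finset S, ∑ s ∈ F, p s ≤ 1) (hn : n ≠ 0) :
    empiricalEntropy x n ≤ (∑ i ∈ range n, -log (p (x i))) / n := by
  rw [empiricalEntropy_eq_sum, ← sum_empiricalFreq_mul x n fun s => -log (p s)]
  refine sum_negMulLog_le_sum_mul_neg_log ?_ (fun s _ => empiricalFreq_nonneg x n s) (hp1 _)
    (sum_empiricalFreq x n hn)
  intro s hs
  obtain ⟨i, -, rfl⟩ := mem_image.1 hs
  exact hp i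

theorem tendsto_empiricalEntropy {p : S → ℝ} (hp : ∀ i, 0 < p (x i))
    (hp1 : ∀ F : Finset S, ∑ s ∈ F, p s ≤ 1) (hH : Summable fun s => negMulLog (p s))
    (hfreq : ∀ s, Tendsto (fun n => empiricalFreq x n s) atTop (𝓝 (p s)))
    (hcross : Tendsto (fun n : ℕ => (∑ i ∈ range n, -log (p (x i))) / n) atTop
      (𝓝 (∑' s, negMulLog (p s)))) :
    Tendsto (empiricalEntropy x) atTop (𝓝 (∑' s, negMulLog (p s))) :=
  tendsto_tsum_of_tendsto_of_eventually_le
    (fun n s => negMulLog_nonneg (empiricalFreq_nonneg x n s) (empiricalFreq_le_one x n s))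
    (fun n => summable_of_ne_finset_zero fun s hs => by
      rw [empiricalFreq_eq_zero_of_notMem x n hs, negMulLog_zero])
    hH.hasSum (fun s => (continuous_negMulLog.tendsto _).comp (hfreq s))
    ((eventually_ne_atTop 0).mono fun n hn => empiricalEntropy_le x n hp hp1 hn) hcross

end Empirical

section StrongLaw

variable {Ω S : Type*} [MeasurableSpace Ω] [MeasurableSpace S] {μ : Measure Ω} {X : ℕ → Ω → S}

theorem ae_tendsto_average_comp (hX : ∀ i, Measurable (X i)) (hindep : iIndepFun X μ)
    (hident : ∀ i, μ.map (X i) = μ.map (X 0)) {g : S → ℝ} (hg : Measurable g)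
    (hint : Integrable g (μ.map (X 0))) :
    ∀ᵐ ω ∂μ, Tendsto (fun n : ℕ => (∑ i ∈ range n, g (X i ω)) / n) atTop
      (𝓝 (∫ s, g s ∂μ.map (X 0))) := by
  rw [integral_map (hX 0).aemeasurable hg.aestronglyMeasurable]
  exact strong_law_ae_real (fun i ω => g (X i ω))
    ((integrable_map_measure hg.aestronglyMeasurable (hX 0).aemeasurable).1 hint)
    (fun i j hij => (hindep.indepFun hij).comp hg hg)
    (fun i => IdentDistrib.comp ⟨(hX i).aemeasurable, (hX 0).aemeasurable, hident i⟩ hg)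

variable [Countable S]

lemma ae_map_singleton_ne_zero {f : Ω → S} (hf : Measurable f) :
    ∀ᵐ ω ∂μ, μ.map f {f ω} ≠ 0 :=
  ae_of_ae_map hf.aemeasurable (ae_iff_of_countable.2 fun _ h => h)

variable [MeasurableSingletonClass S]

lemma integrable_of_summable_measureReal_mul_norm {ν : Measure S} [IsFiniteMeasure ν]
    {g : S → ℝ} (h : Summable fun s => ν.real {s} * ‖g s‖) : Integrable g ν := by
  rw [← Measure.sum_smul_dirac ν]
  exact integrable_sum_dirac (fun s => measure_ne_top ν {s}) h

theorem ae_tendsto_average_comp_of_summable (hX : ∀ i, Measurable (X i))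
    (hindep : iIndepFun X μ) (hident : ∀ i, μ.map (X i) = μ.map (X 0))
    [IsFiniteMeasure (μ.map (X 0))] {g : S → ℝ}
    (hg : Summable fun s => (μ.map (X 0)).real {s} * ‖g s‖) :
    ∀ᵐ ω ∂μ, Tendsto (fun n : ℕ => (∑ i ∈ range n, g (X i ω)) / n) atTop
      (𝓝 (∑' s, (μ.map (X 0)).real {s} * g s)) := by
  have hint := integrable_of_summable_measureReal_mul_norm hg
  simpa only [integral_countable hint, smul_eq_mul] using
    ae_tendsto_average_comp hX hindep hident (measurable_of_countable g) hint

end StrongLaw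

lemma neg_tsum_mul_log {S : Type*} (f : S → ℝ) :
    -∑' s, f s * log (f s) = ∑' s, negMulLog (f s) := by
  simp only [negMulLog, neg_mul, tsum_neg]

/-- For an i.i.d. sequence of discrete random elements (e.g. the vector
`(X_d,Y_d,Z_d)`) with values in a countable set and finite entropy, the plug-in empirical
entropy converges to the true entropy almost surely (convention `0 log 0 = 0`). -/
theorem stmt14 {Ω S : Type*} [MeasurableSpace Ω] [MeasurableSpace S]
    [Countable S] [MeasurableSingletonClass S] [DecidableEq S]
    (μ : Measure Ω) [IsProbabilityMeasure μ]
    (X : ℕ → Ω → S) (hX : ∀ i, Measurable (X i))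
    (hindep : iIndepFun X μ)
    (hident : ∀ i, μ.map (X i) = μ.map (X 0))
    (hH : Summable (fun s : S =>
      ((μ.map (X 0)) {s}).toReal * Real.log ((μ.map (X 0)) {s}).toReal)) :
    ∀ᵐ ω ∂μ, Tendsto (fun n : ℕ =>
        -∑' s : S, ((((Finset.range n).filter (fun i => X i ω = s)).card : ℝ) / n) *
          Real.log ((((Finset.range n).filter (fun i => X i ω = s)).card : ℝ) / n))
      atTop
      (nhds (-∑' s : S,
        ((μ.map (X 0)) {s}).toReal * Real.log ((μ.map (X 0)) {s}).toReal)) := by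
  set ν := μ.map (X 0)
  have : IsProbabilityMeasure ν := Measure.isProbabilityMeasure_map (hX 0).aemeasurable
  have hfreq : ∀ᵐ ω ∂μ, ∀ s, Tendsto (fun n => empiricalFreq (X · ω) n s) atTop
      (𝓝 (ν.real {s})) := by
    refine ae_all_iff.2 fun s => ?_
    have := ae_tendsto_average_comp_of_summable hX hindep hident
      (g := fun t => if t = s then 1 else 0)
      (summable_of_ne_finset_zero (s := {s}) fun t ht => by simp_all)
    simpa [sum_boole, empiricalFreq] using this
  have hcross := ae_tendsto_average_comp_of_summable hX hindep hident
    (g := fun s => -log (ν.real {s})) (by simpa [abs_mul, measureReal_def] using hH.abs)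
  have hsupp : ∀ᵐ ω ∂μ, ∀ i, 0 < ν.real {X i ω} := by
    refine ae_all_iff.2 fun i => ?_
    filter_upwards [hident i ▸ ae_map_singleton_ne_zero (μ := μ) (hX i)] with ω hω
    exact ENNReal.toReal_pos hω (measure_ne_top ν _)
  filter_upwards [hfreq, hcross, hsupp] with ω hω_freq hω_cross hω_supp
  simp only [neg_tsum_mul_log]
  refine tendsto_empiricalEntropy _ hω_supp
    (fun F => (sum_measureReal_singleton F).trans_le measureReal_le_one)
    (by simpa only [negMulLog_eq_neg] using hH.neg) hω_freq ?_
  simpa only [negMulLog, neg_mul, mul_neg, measureReal_def] using hω_cross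
end

section
/- The parametric complexity of a K-bin multinomial/histogram model, R(n,K) = Σ_{c_1+...+c_K = n} (n!/(c_1!···c_K!)) · ∏_{i=1}^K (c_i/n)^{c_i}, satisfies the recurrence R(n,K+2) = R(n,K+1) + (n/K) · R(n,K) for all K ≥ 1, with R(n,1) = 1. -/
/-!
Since `∏ (c_i/n)^{c_i} = ∏ c_i^{c_i} / n^n`, `R(n,K) = n!/n^n · [z^n] A(z)^K` for the exponential
generating function `A(z) = Σ k^k z^k/k!`. The tree function `T(z) = Σ k^{k-1} z^k/k!` satisfies
`z T' = A - 1` termwise, and `T A = A - 1` by Abel's identity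
`Σ_k C(n,k) k^{k-1} (n-k)^{n-k} = n^n`. Differentiating `(1 - T) A = 1` gives `A' = T' A^2`, so
`z A' = (A - 1) A^2` and `z (A^K)' = K (A^{K+2} - A^{K+1})`; comparing coefficients of `z^n` is the
recurrence.

Abel's identity is the value at `Y = n` of the polynomial identity
`Σ_k C(n,k) k^{k-1} (Y - k)^{n-k} = n Y^{n-1}`: both sides have the same derivative by induction on
`n`, and they agree at `Y = 0`, where the left side is an `n`-th finite difference of `k ↦ k^{n-1}`.
-/

open Finset

/-- The parametric complexity (NML normalizer) of a `K`-bin multinomial/histogram model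
with `n` observations: `R(n,K) = Σ_{c_1+…+c_K=n} n!/(c_1!⋯c_K!) ∏_i (c_i/n)^{c_i}`
(convention `0^0 = 1`). -/
noncomputable def parametricComplexity (n K : ℕ) : ℝ :=
  ∑ c ∈ Finset.Nat.antidiagonalTuple K n,
    ((n.factorial : ℝ) / ∏ i, ((c i).factorial : ℝ)) * ∏ i, ((c i : ℝ) / n) ^ (c i)

theorem sum_neg_one_pow_mul_choose_mul_pow_eq_zero {R : Type*} [CommRing R] {m n : ℕ}
    (h : m < n) : ∑ k ∈ range (n + 1), (-1 : R) ^ (n - k) * n.choose k * (k : R) ^ m = 0 := by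
  have := congr_fun (fwdDiff_iter_pow_eq_zero_of_lt (R := R) h) 0
  rw [fwdDiff_iter_eq_sum_shift] at this
  simpa [zsmul_eq_mul] using this

-- `0` at `k = 0`, not `0 ^ (0 - 1) = 1`: the tree function has no constant term.
noncomputable def rootedTreeCount (k : ℕ) : ℝ := if k = 0 then 0 else (k : ℝ) ^ (k - 1)

section AbelIdentity

open Polynomial

noncomputable def abelPoly (n : ℕ) : ℝ[X] :=
  ∑ k ∈ range (n + 1), C (n.choose k * rootedTreeCount k) * (X - C (k : ℝ)) ^ (n - k)

theorem derivative_abelPoly (n : ℕ) :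
    derivative (abelPoly (n + 1)) = C ((n : ℝ) + 1) * abelPoly n := by
  rw [abelPoly, abelPoly, derivative_sum, sum_range_succ, mul_sum]
  simp only [derivative_C_mul, derivative_X_sub_C_pow, Nat.sub_self, Nat.cast_zero, C_0,
    zero_mul, mul_zero, add_zero]
  refine sum_congr rfl fun k hk => ?_
  have hk : k ≤ n := Nat.lt_succ_iff.mp (mem_range.mp hk)
  have hchoose : ((n + 1).choose k : ℝ) * ((n + 1 - k : ℕ) : ℝ) = (n.choose k) * ((n : ℝ) + 1) := by
    exact_mod_cast (Nat.choose_mul_succ_eq n k).symm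
  rw [show n + 1 - k - 1 = n - k by omega, ← mul_assoc, ← C_mul, ← mul_assoc, ← C_mul]
  congr 2
  linear_combination rootedTreeCount k * hchoose

theorem abelPoly_eval_zero {n : ℕ} (hn : 2 ≤ n) : (abelPoly n).eval 0 = 0 := by
  rw [abelPoly, eval_finsetSum]
  refine .trans (sum_congr rfl fun k hk => ?_)
    (sum_neg_one_pow_mul_choose_mul_pow_eq_zero (R := ℝ) (by omega : n - 1 < n))
  have hk : k ≤ n := Nat.lt_succ_iff.mp (mem_range.mp hk)
  simp only [eval_mul, eval_C, eval_pow, eval_sub, eval_X, zero_sub, rootedTreeCount]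
  split_ifs with hk0
  · simp [hk0, zero_pow (by omega : n - 1 ≠ 0)]
  · rw [neg_pow, show n - 1 = (k - 1) + (n - k) by omega, pow_add]
    ring

theorem abelPoly_succ (n : ℕ) : abelPoly (n + 1) = C ((n : ℝ) + 1) * X ^ n := by
  induction n with
  | zero => simp [abelPoly, sum_range_succ, rootedTreeCount]
  | succ n ih =>
    have hderiv : derivative (abelPoly (n + 2) - C ((n + 1 : ℕ) + 1 : ℝ) * X ^ (n + 1)) = 0 := by
      rw [derivative_sub, derivative_abelPoly, ih, derivative_C_mul, derivative_X_pow]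
      push_cast
      ring
    rw [← sub_eq_zero, eq_C_of_derivative_eq_zero hderiv, coeff_zero_eq_eval_zero, eval_sub,
      abelPoly_eval_zero (by omega)]
    simp

end AbelIdentity

open Nat PowerSeries

noncomputable def treeEGF : ℝ⟦X⟧ := mk fun k => rootedTreeCount k / k !

noncomputable def selfPowEGF : ℝ⟦X⟧ := mk fun k => (k : ℝ) ^ k / k !

theorem coeff_X_mul_derivative {R : Type*} [CommSemiring R] (f : R⟦X⟧) (n : ℕ) :
    coeff n (X * d⁄dX R f) = n * coeff n f := by
  cases n with
  | zero => simp
  | succ n => rw [coeff_succ_X_mul, coeff_derivative, mul_comm]; push_cast; rfl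

theorem X_mul_derivative_treeEGF : X * d⁄dX ℝ treeEGF = selfPowEGF - 1 := by
  ext n
  rw [coeff_X_mul_derivative, map_sub, coeff_one]
  cases n with
  | zero => simp [selfPowEGF]
  | succ n =>
    simp only [treeEGF, selfPowEGF, coeff_mk, rootedTreeCount, if_neg n.succ_ne_zero, sub_zero,
      Nat.add_sub_cancel]
    ring

theorem treeEGF_mul_selfPowEGF : treeEGF * selfPowEGF = selfPowEGF - 1 := by
  ext n
  rw [coeff_mul, Nat.sum_antidiagonal_eq_sum_range_succ_mk, map_sub, coeff_one]
  cases n with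
  | zero => simp [treeEGF, selfPowEGF, rootedTreeCount]
  | succ n =>
    have habel := congr_arg (Polynomial.eval ((n : ℝ) + 1)) (abelPoly_succ n)
    simp only [abelPoly, Polynomial.eval_finsetSum, Polynomial.eval_mul, Polynomial.eval_C,
      Polynomial.eval_pow, Polynomial.eval_sub, Polynomial.eval_X] at habel
    rw [← pow_succ' ((n : ℝ) + 1)] at habel
    rw [if_neg n.succ_ne_zero, sub_zero, selfPowEGF, coeff_mk, Nat.cast_succ, ← habel, sum_div]
    refine sum_congr rfl fun k hk => ?_
    have hk : k ≤ n + 1 := Nat.lt_succ_iff.mp (mem_range.mp hk)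
    simp only [treeEGF, coeff_mk]
    rw [Nat.cast_choose ℝ hk, Nat.cast_sub hk]
    field_simp
    push_cast
    ring

theorem X_mul_derivative_selfPowEGF :
    X * d⁄dX ℝ selfPowEGF = (selfPowEGF - 1) * selfPowEGF ^ 2 := by
  have hinv : (1 - treeEGF) * selfPowEGF = 1 := by linear_combination -treeEGF_mul_selfPowEGF
  have hderiv : (1 - treeEGF) * d⁄dX ℝ selfPowEGF = d⁄dX ℝ treeEGF * selfPowEGF := by
    have := congr_arg (d⁄dX ℝ) hinv
    rw [Derivation.leibniz, map_sub, derivative_one] at this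
    simp only [smul_eq_mul] at this
    linear_combination this
  linear_combination (X * selfPowEGF) * hderiv - X * d⁄dX ℝ selfPowEGF * hinv
    + selfPowEGF ^ 2 * X_mul_derivative_treeEGF

theorem X_mul_derivative_selfPowEGF_pow (K : ℕ) :
    X * d⁄dX ℝ (selfPowEGF ^ K) = (K : ℝ⟦X⟧) * (selfPowEGF ^ (K + 2) - selfPowEGF ^ (K + 1)) := by
  rw [Derivation.leibniz_pow, nsmul_eq_mul, smul_eq_mul]
  cases K with
  | zero => simp
  | succ K =>
    rw [Nat.add_sub_cancel]
    linear_combination (((K + 1 : ℕ) : ℝ⟦X⟧) * selfPowEGF ^ K) * X_mul_derivative_selfPowEGF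

theorem coeff_pow_eq_sum_antidiagonalTuple {R : Type*} [CommSemiring R] (f : R⟦X⟧) (K n : ℕ) :
    coeff n (f ^ K) = ∑ c ∈ Finset.Nat.antidiagonalTuple K n, ∏ i, coeff (c i) f := by
  rw [← Fin.prod_const, coeff_prod]
  refine sum_equiv Finsupp.equivFunOnFinite (fun c => ?_) fun c _ => rfl
  simp [Finset.Nat.mem_antidiagonalTuple]

theorem parametricComplexity_eq_coeff (n K : ℕ) :
    parametricComplexity n K = n ! / (n : ℝ) ^ n * coeff n (selfPowEGF ^ K) := by
  rw [parametricComplexity, coeff_pow_eq_sum_antidiagonalTuple, mul_sum]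
  refine sum_congr rfl fun c hc => ?_
  rw [Finset.Nat.mem_antidiagonalTuple] at hc
  simp only [selfPowEGF, coeff_mk, div_pow, prod_div_distrib, prod_pow_eq_pow_sum, hc]
  ring

theorem parametricComplexity_one (n : ℕ) : parametricComplexity n 1 = 1 := by
  rcases n.eq_zero_or_pos with rfl | hn
  · simp [parametricComplexity]
  · simp [parametricComplexity, Finset.Nat.antidiagonalTuple_one, hn.ne', n.factorial_ne_zero]

theorem stmt16_general (n : ℕ) :
    parametricComplexity n 1 = 1 ∧
      ∀ K : ℕ, 1 ≤ K →
        parametricComplexity n (K + 2)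
          = parametricComplexity n (K + 1) + ((n : ℝ) / K) * parametricComplexity n K := by
  refine ⟨parametricComplexity_one n, fun K hK => ?_⟩
  have hrec := congr_arg (coeff n) (X_mul_derivative_selfPowEGF_pow K)
  rw [coeff_X_mul_derivative, ← map_natCast (C (R := ℝ)), coeff_C_mul, map_sub] at hrec
  have hcoeff : coeff n (selfPowEGF ^ (K + 2))
      = coeff n (selfPowEGF ^ (K + 1)) + n / K * coeff n (selfPowEGF ^ K) := by
    have hK0 : (K : ℝ) ≠ 0 := Nat.cast_ne_zero.mpr (by omega)
    field_simp
    linear_combination -hrec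
  rw [parametricComplexity_eq_coeff, parametricComplexity_eq_coeff, parametricComplexity_eq_coeff,
    hcoeff]
  ring

/-- The parametric complexity satisfies `R(n,1) = 1` and the recurrence
`R(n,K+2) = R(n,K+1) + (n/K)·R(n,K)` for all `K ≥ 1`. -/
theorem stmt16 (n : ℕ) (hn : 1 ≤ n) :
    parametricComplexity n 1 = 1 ∧
      ∀ K : ℕ, 1 ≤ K →
        parametricComplexity n (K + 2)
          = parametricComplexity n (K + 1) + ((n : ℝ) / K) * parametricComplexity n K :=
  stmt16_general n
end
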